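/- (Second moment bound for the SGC gradient estimator.) Let g_1,…,g_m ∈ ℝ^ℓ be vectors with ‖g_i‖₂ ≤ C for all i, and define the random vector ĝ := Σ_{j=1}^n B_j · Σ_{i ∈ S_j} g_i/(d_i·(1−p)). Then E‖ĝ‖₂² ≤ m·C²·( p/((1−p)·d_min) + (m−1)·p/(n·(1−p)) + m ), where d_min := min_{i} d_i. -/

import Mathlib

/-!
Write `ĝ = ∑ⱼ Bⱼ • vⱼ` with `vⱼ = ∑_{i ∈ Sⱼ} gᵢ / (dᵢ q)` and `q = 1 - p`. Since `E[Bⱼ Bₖ]` is `q²`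
for `j ≠ k` and `q` for `j = k`, `E‖ĝ‖² = q² ‖∑ⱼ vⱼ‖² + p q ∑ⱼ ‖vⱼ‖²`. Each `i` lies in exactly `dᵢ`
of the sets, so `∑ⱼ vⱼ = q⁻¹ ∑ᵢ gᵢ` has norm at most `m C / q`. Expanding `∑ⱼ ‖vⱼ‖²` over pairs
`(i, i')`, a pair is counted `dᵢ` times on the diagonal and `dᵢ dᵢ' / n` times off it; these counts
cancel the weights `1 / (dᵢ dᵢ')`, leaving at most `C² / (q² d_min)` per diagonal term and
`C² / (q² n)` per off-diagonal one.
-/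

open MeasureTheory ProbabilityTheory Finset
open scoped RealInnerProductSpace

section Incidence

variable {ι α : Type*} [Fintype ι] [Fintype α] [DecidableEq α]

theorem sum_sum_mem_eq_sum_card_smul {M : Type*} [AddCommMonoid M] (S : ι → Finset α)
    (f : α → M) : ∑ j, ∑ i ∈ S j, f i = ∑ i, #{j | i ∈ S j} • f i := by
  rw [sum_comm' (t' := univ) (s' := fun i => {j | i ∈ S j}) (by simp)]
  simp only [sum_const]

theorem sum_sum_mem_inv_smul_eq_sum {M : Type*} [AddCommGroup M] [Module ℝ M]
    (S : ι → Finset α) (d : α → ℕ) (hd : ∀ i, d i ≠ 0) (hdeg : ∀ i, #{j | i ∈ S j} = d i)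
    (g : α → M) : ∑ j, ∑ i ∈ S j, (d i : ℝ)⁻¹ • g i = ∑ i, g i := by
  rw [sum_sum_mem_eq_sum_card_smul]
  refine sum_congr rfl fun i _ => ?_
  rw [hdeg, ← Nat.cast_smul_eq_nsmul ℝ, smul_smul, mul_inv_cancel₀ (by exact_mod_cast hd i),
    one_smul]

variable {E : Type*} [NormedAddCommGroup E] [InnerProductSpace ℝ E]

theorem sum_norm_sq_sum_mem (S : ι → Finset α) (u : α → E) :
    ∑ j, ‖∑ i ∈ S j, u i‖ ^ 2 = ∑ i, ∑ i', (#{j | i ∈ S j ∧ i' ∈ S j} : ℝ) * ⟪u i, u i'⟫ := by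
  have hpairs : ∀ j, ‖∑ i ∈ S j, u i‖ ^ 2 = ∑ x ∈ S j ×ˢ S j, ⟪u x.1, u x.2⟫ := fun j => by
    simp_rw [← real_inner_self_eq_norm_sq, sum_inner, inner_sum, sum_product]
  simp_rw [hpairs]
  rw [sum_sum_mem_eq_sum_card_smul (fun j => S j ×ˢ S j), Fintype.sum_prod_type]
  simp only [mem_product, nsmul_eq_mul]

end Incidence

theorem Fintype.sum_sum_ite_eq_const {α : Type*} [Fintype α] [DecidableEq α] (a b : ℝ) :
    ∑ i : α, ∑ i' : α, (if i = i' then a else b)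
      = Fintype.card α * a + Fintype.card α * (Fintype.card α - 1) * b := by
  have hrow : ∀ i : α, ∑ i' : α, (if i = i' then a else b) = a + (Fintype.card α - 1) * b := by
    intro i
    rw [sum_ite, filter_eq, filter_ne]
    simp [Nat.cast_pred (Fintype.card_pos_iff.mpr ⟨i⟩)]
  simp only [hrow, sum_const, card_univ, nsmul_eq_mul]
  ring

theorem real_inner_le_sq_of_norm_le {E : Type*} [NormedAddCommGroup E] [InnerProductSpace ℝ E]
    {x y : E} {C : ℝ} (hx : ‖x‖ ≤ C) (hy : ‖y‖ ≤ C) : ⟪x, y⟫ ≤ C ^ 2 :=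
  calc ⟪x, y⟫ ≤ ‖x‖ * ‖y‖ := real_inner_le_norm x y
    _ ≤ C * C := mul_le_mul hx hy (norm_nonneg y) ((norm_nonneg x).trans hx)
    _ = C ^ 2 := (sq C).symm

section Balanced

variable {ι α E : Type*} [Fintype ι] [DecidableEq α]
  [NormedAddCommGroup E] [InnerProductSpace ℝ E]
  {S : ι → Finset α} {n : ℕ} {d : α → ℕ} {δ C : ℝ} {g : α → E}

theorem card_mul_inner_inv_smul_self_le (hdpos : ∀ i, 0 < d i)
    (hdeg : ∀ i, #{j | i ∈ S j} = d i) (hδ : 0 < δ) (hδd : ∀ i, δ ≤ d i)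
    (hg : ∀ i, ‖g i‖ ≤ C) (i : α) :
    (#{j | i ∈ S j ∧ i ∈ S j} : ℝ) * ⟪(d i : ℝ)⁻¹ • g i, (d i : ℝ)⁻¹ • g i⟫ ≤ C ^ 2 / δ := by
  have hdi : (0 : ℝ) < d i := by exact_mod_cast hdpos i
  simp only [and_self, hdeg]
  rw [real_inner_smul_left, real_inner_smul_right, real_inner_self_eq_norm_sq]
  calc (d i : ℝ) * ((d i : ℝ)⁻¹ * ((d i : ℝ)⁻¹ * ‖g i‖ ^ 2)) = ‖g i‖ ^ 2 / d i := by
        field_simp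
    _ ≤ C ^ 2 / δ :=
        div_le_div₀ (by positivity) (pow_le_pow_left₀ (norm_nonneg _) (hg i) 2) hδ (hδd i)

theorem card_mul_inner_inv_smul_le_of_ne (hdpos : ∀ i, 0 < d i)
    (hpair : ∀ i i', i ≠ i' → #{j | i ∈ S j ∧ i' ∈ S j} * n = d i * d i')
    (hg : ∀ i, ‖g i‖ ≤ C) {i i' : α} (hii' : i ≠ i') :
    (#{j | i ∈ S j ∧ i' ∈ S j} : ℝ) * ⟪(d i : ℝ)⁻¹ • g i, (d i' : ℝ)⁻¹ • g i'⟫ ≤ C ^ 2 / n := by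
  have hdi : (0 : ℝ) < d i := by exact_mod_cast hdpos i
  have hdi' : (0 : ℝ) < d i' := by exact_mod_cast hdpos i'
  have hcard : (#{j | i ∈ S j ∧ i' ∈ S j} : ℝ) * n = d i * d i' := by
    exact_mod_cast hpair i i' hii'
  have hn : (0 : ℝ) < n := by
    refine lt_of_le_of_ne (Nat.cast_nonneg n) fun hn => ?_
    rw [← hn, mul_zero] at hcard
    exact (mul_pos hdi hdi').ne hcard
  rw [eq_div_of_mul_eq hn.ne' hcard, real_inner_smul_left, real_inner_smul_right]
  calc (d i : ℝ) * d i' / n * ((d i : ℝ)⁻¹ * ((d i' : ℝ)⁻¹ * ⟪g i, g i'⟫)) = ⟪g i, g i'⟫ / n := by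
        field_simp
    _ ≤ C ^ 2 / n := div_le_div_of_nonneg_right (real_inner_le_sq_of_norm_le (hg i) (hg i')) hn.le

theorem sum_norm_sq_sum_mem_inv_smul_le [Fintype α] (hdpos : ∀ i, 0 < d i)
    (hdeg : ∀ i, #{j | i ∈ S j} = d i)
    (hpair : ∀ i i', i ≠ i' → #{j | i ∈ S j ∧ i' ∈ S j} * n = d i * d i')
    (hδ : 0 < δ) (hδd : ∀ i, δ ≤ d i) (hg : ∀ i, ‖g i‖ ≤ C) :
    ∑ j, ‖∑ i ∈ S j, (d i : ℝ)⁻¹ • g i‖ ^ 2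
      ≤ Fintype.card α * (C ^ 2 / δ) + Fintype.card α * (Fintype.card α - 1) * (C ^ 2 / n) := by
  rw [sum_norm_sq_sum_mem, ← Fintype.sum_sum_ite_eq_const]
  refine sum_le_sum fun i _ => sum_le_sum fun i' _ => ?_
  split_ifs with hii'
  · subst hii'
    exact card_mul_inner_inv_smul_self_le hdpos hdeg hδ hδd hg i
  · exact card_mul_inner_inv_smul_le_of_ne hdpos hpair hg hii'

end Balanced

theorem norm_sum_smul_sq {ι E : Type*} [Fintype ι] [NormedAddCommGroup E] [InnerProductSpace ℝ E]
    (b : ι → ℝ) (v : ι → E) :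
    ‖∑ j, b j • v j‖ ^ 2 = ∑ j, ∑ k, b j * b k * ⟪v j, v k⟫ := by
  simp_rw [← real_inner_self_eq_norm_sq, sum_inner, inner_sum, real_inner_smul_left,
    real_inner_smul_right, mul_assoc]

section Bernoulli

variable {Ω : Type*} [MeasurableSpace Ω] {μ : Measure Ω}

theorem integral_eq_measureReal_of_zero_or_one {X : Ω → ℝ} (hX : Measurable X)
    (h01 : ∀ ω, X ω = 0 ∨ X ω = 1) : ∫ ω, X ω ∂μ = μ.real {ω | X ω = 1} := by
  have hind : X = {ω | X ω = 1}.indicator 1 := by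
    funext ω
    rcases h01 ω with h | h <;> simp [h]
  conv_lhs => rw [hind]
  exact integral_indicator_one (hX (measurableSet_singleton 1))

variable {ι : Type*} {B : ι → Ω → ℝ}

theorem integral_mul_of_iIndepFun_zero_or_one [DecidableEq ι] (hB : iIndepFun B μ)
    (hmeas : ∀ j, Measurable (B j)) (h01 : ∀ j ω, B j ω = 0 ∨ B j ω = 1) {q : ℝ}
    (hq : ∀ j, ∫ ω, B j ω ∂μ = q) (j k : ι) :
    ∫ ω, B j ω * B k ω ∂μ = if j = k then q else q ^ 2 := by
  split_ifs with hjk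
  · subst hjk
    rw [← hq j]
    congr 1 with ω
    rcases h01 j ω with h | h <;> simp [h]
  · rw [(hB.indepFun hjk).integral_fun_mul_eq_mul_integral (hmeas j).aestronglyMeasurable
      (hmeas k).aestronglyMeasurable, hq, hq, sq]

theorem integrable_mul_of_zero_or_one [IsFiniteMeasure μ] (hmeas : ∀ j, Measurable (B j))
    (h01 : ∀ j ω, B j ω = 0 ∨ B j ω = 1) (j k : ι) :
    Integrable (fun ω => B j ω * B k ω) μ := by
  refine .of_bound ((hmeas j).mul (hmeas k)).aestronglyMeasurable 1 (.of_forall fun ω => ?_)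
  rcases h01 j ω with h | h <;> rcases h01 k ω with h' | h' <;> simp [h, h']

theorem integral_norm_sum_smul_sq_of_iIndepFun [IsProbabilityMeasure μ] [Fintype ι] [DecidableEq ι]
    {E : Type*} [NormedAddCommGroup E] [InnerProductSpace ℝ E]
    (hB : iIndepFun B μ) (hmeas : ∀ j, Measurable (B j)) (h01 : ∀ j ω, B j ω = 0 ∨ B j ω = 1)
    {q : ℝ} (hq : ∀ j, ∫ ω, B j ω ∂μ = q) (v : ι → E) :
    ∫ ω, ‖∑ j, B j ω • v j‖ ^ 2 ∂μ = q ^ 2 * ‖∑ j, v j‖ ^ 2 + q * (1 - q) * ∑ j, ‖v j‖ ^ 2 := by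
  have hint := integrable_mul_of_zero_or_one (μ := μ) hmeas h01
  simp_rw [norm_sum_smul_sq]
  rw [integral_finsetSum _ fun j _ => integrable_finsetSum _ fun k _ => (hint j k).mul_const _]
  simp_rw [integral_finsetSum _ fun k _ => (hint _ k).mul_const _, integral_mul_const,
    integral_mul_of_iIndepFun_zero_or_one hB hmeas h01 hq, ← real_inner_self_eq_norm_sq,
    sum_inner, inner_sum, mul_sum]
  rw [← sum_add_distrib]
  refine sum_congr rfl fun j _ => ?_
  rw [← Fintype.sum_ite_eq j (fun k => q * (1 - q) * ⟪v j, v k⟫), ← sum_add_distrib]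
  refine sum_congr rfl fun k _ => ?_
  split_ifs <;> ring

end Bernoulli

theorem sgc_second_moment_bound_general
    (m n l : ℕ) (hm : 0 < m)
    (S : Fin n → Finset (Fin m)) (d : Fin m → ℕ) (hdpos : ∀ i, 0 < d i)
    (hdeg : ∀ i : Fin m, (Finset.univ.filter (fun j => i ∈ S j)).card = d i)
    (hpair : ∀ i i' : Fin m, i ≠ i' →
      (Finset.univ.filter (fun j => i ∈ S j ∧ i' ∈ S j)).card * n = d i * d i')
    (p : ℝ) (hp0 : 0 ≤ p) (hp1 : p < 1)
    (Ω : Type*) [MeasureSpace Ω] [IsProbabilityMeasure (ℙ : Measure Ω)]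
    (B : Fin n → Ω → ℝ)
    (hB01 : ∀ j ω, B j ω = 0 ∨ B j ω = 1)
    (hBmeas : ∀ j, Measurable (B j))
    (hBp : ∀ j, (ℙ : Measure Ω) {ω | B j ω = 1} = ENNReal.ofReal (1 - p))
    (hBindep : iIndepFun B ℙ)
    (C : ℝ) (g : Fin m → EuclideanSpace ℝ (Fin l))
    (hg : ∀ i, ‖g i‖ ≤ C)
    (ghat : Ω → EuclideanSpace ℝ (Fin l))
    (hghat : ∀ ω, ghat ω = ∑ j, B j ω • ∑ i ∈ S j, ((d i : ℝ) * (1 - p))⁻¹ • g i)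
    (dmin : ℝ)
    (hdmin : dmin = Finset.univ.inf' ⟨⟨0, hm⟩, Finset.mem_univ _⟩ (fun i : Fin m => (d i : ℝ))) :
    ∫ ω, ‖ghat ω‖ ^ 2 ≤
      m * C ^ 2 * (p / ((1 - p) * dmin) + (m - 1) * p / (n * (1 - p)) + m) := by
  have hq : 0 < 1 - p := sub_pos.mpr hp1
  set w : Fin n → EuclideanSpace ℝ (Fin l) := fun j => ∑ i ∈ S j, (d i : ℝ)⁻¹ • g i
  have hv : ∀ j, ∑ i ∈ S j, ((d i : ℝ) * (1 - p))⁻¹ • g i = (1 - p)⁻¹ • w j := fun j => by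
    simp only [w, smul_sum, smul_smul, mul_inv, mul_comm]
  have hEB : ∀ j, ∫ ω, B j ω = 1 - p := fun j => by
    rw [integral_eq_measureReal_of_zero_or_one (hBmeas j) (hB01 j), measureReal_def, hBp,
      ENNReal.toReal_ofReal hq.le]
  have hmoment : ∫ ω, ‖ghat ω‖ ^ 2 = ‖∑ i, g i‖ ^ 2 + p / (1 - p) * ∑ j, ‖w j‖ ^ 2 := by
    simp_rw [hghat, hv]
    rw [integral_norm_sum_smul_sq_of_iIndepFun hBindep hBmeas hB01 hEB, ← smul_sum,
      sum_sum_mem_inv_smul_eq_sum S d (fun i => (hdpos i).ne') hdeg]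
    simp only [norm_smul, mul_pow, ← mul_sum, norm_inv, Real.norm_of_nonneg hq.le]
    field_simp
    ring
  have hdmin_pos : 0 < dmin := hdmin ▸ (lt_inf'_iff _).mpr fun i _ => by exact_mod_cast hdpos i
  have hdmin_le : ∀ i, dmin ≤ d i := fun i => hdmin ▸ inf'_le _ (mem_univ i)
  have hsum : ‖∑ i, g i‖ ≤ m * C := by
    simpa using norm_sum_le_of_le univ fun i _ => hg i
  have hw := sum_norm_sq_sum_mem_inv_smul_le hdpos hdeg hpair hdmin_pos hdmin_le hg
  rw [Fintype.card_fin] at hw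
  calc ∫ ω, ‖ghat ω‖ ^ 2
      ≤ (m * C) ^ 2 + p / (1 - p) * (m * (C ^ 2 / dmin) + m * (m - 1) * (C ^ 2 / n)) := by
        rw [hmoment]
        gcongr
    _ = m * C ^ 2 * (p / ((1 - p) * dmin) + (m - 1) * p / (n * (1 - p)) + m) := by
        field_simp
        ring

/-- **Second moment bound for the SGC gradient estimator.**
If `‖g_i‖ ≤ C` for all `i`, then
`E‖ĝ‖₂² ≤ m C² (p/((1−p) d_min) + (m−1) p/(n (1−p)) + m)`. -/
theorem sgc_second_moment_bound
    (m n l : ℕ) (hn : 1 ≤ n) (hm : 0 < m)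
    (S : Fin n → Finset (Fin m)) (d : Fin m → ℕ) (hdpos : ∀ i, 0 < d i)
    (hdeg : ∀ i : Fin m, (Finset.univ.filter (fun j => i ∈ S j)).card = d i)
    (hpair : ∀ i i' : Fin m, i ≠ i' →
      (Finset.univ.filter (fun j => i ∈ S j ∧ i' ∈ S j)).card * n = d i * d i')
    (p : ℝ) (hp0 : 0 ≤ p) (hp1 : p < 1)
    (Ω : Type*) [MeasureSpace Ω] [IsProbabilityMeasure (ℙ : Measure Ω)]
    (B : Fin n → Ω → ℝ)
    (hB01 : ∀ j ω, B j ω = 0 ∨ B j ω = 1)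
    (hBmeas : ∀ j, Measurable (B j))
    (hBp : ∀ j, (ℙ : Measure Ω) {ω | B j ω = 1} = ENNReal.ofReal (1 - p))
    (hBindep : iIndepFun B ℙ)
    (C : ℝ) (g : Fin m → EuclideanSpace ℝ (Fin l))
    (hg : ∀ i, ‖g i‖ ≤ C)
    (ghat : Ω → EuclideanSpace ℝ (Fin l))
    (hghat : ∀ ω, ghat ω = ∑ j, B j ω • ∑ i ∈ S j, ((d i : ℝ) * (1 - p))⁻¹ • g i)
    (dmin : ℝ)
    (hdmin : dmin = Finset.univ.inf' ⟨⟨0, hm⟩, Finset.mem_univ _⟩ (fun i : Fin m => (d i : ℝ))) :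
    ∫ ω, ‖ghat ω‖ ^ 2 ≤
      m * C ^ 2 * (p / ((1 - p) * dmin) + (m - 1) * p / (n * (1 - p)) + m) :=
  sgc_second_moment_bound_general m n l hm S d hdpos hdeg hpair p hp0 hp1 Ω B hB01 hBmeas hBp
    hBindep C g hg ghat hghat dmin hdmin
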